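/- arXiv:0903.2995 — 3 statements merged into one kernel-verified Lean document; each statement's English description precedes it below -/
import Mathlib

section
/- Optimal bid lemma: let v be an internal node of a finite game tree with nonempty finite set of children S, let m = min_{w∈S} R(w), M = max_{w∈S} R(w), and set b = (M − m)/2. If a real number x satisfies x > R(v), then 0 ≤ b ≤ x, there exists a child w₀ ∈ S with x − b > R(w₀), and every child w ∈ S satisfies x + b > R(w). -/
/-!
`R (node c cs)` is the midpoint `(m + M) / 2` of the children's values, so `x > R v` places
`x - b` above `m`, which is attained by a child, and `x + b` above `M`, which bounds every child.
The bound `b ≤ x` holds because Richman values are nonnegative, so `m ≥ 0`.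
-/

/-- The two players. -/
inductive Player : Type
  | alice
  | bob

/-- A finite game tree: either a leaf labeled with the player who wins there,
or an internal node with a nonempty finite list of children (the positions
either player may move to), encoded as a head child `first` plus the
remaining children `rest`. -/
inductive GameTree : Type
  | leaf (winner : Player)
  | node (first : GameTree) (rest : List GameTree)

namespace GameTree

/-- The Richman value: `R (leaf alice) = 0`, `R (leaf bob) = 1`, and at an
internal node it is the average of the minimum and maximum of the Richman
values of the children. -/
noncomputable def R : GameTree → ℝ
  | leaf .alice => 0
  | leaf .bob => 1
  | node c cs =>
      ((cs.attach.map fun w => R w.1).foldr min (R c) +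
       (cs.attach.map fun w => R w.1).foldr max (R c)) / 2
decreasing_by
  all_goals simp only [GameTree.node.sizeOf_spec]
  all_goals try omega
  all_goals (have h := List.sizeOf_lt_of_mem w.2; omega)

end GameTree

namespace List

variable {α : Type*} [LinearOrder α]

theorem foldr_min_mem (a : α) (l : List α) : l.foldr min a ∈ a :: l := by
  induction l with
  | nil => exact mem_cons_self
  | cons b l ih =>
    change min b (l.foldr min a) ∈ a :: b :: l
    rcases min_choice b (l.foldr min a) with h | h <;> rw [h]
    · exact mem_cons_of_mem _ mem_cons_self
    · rcases mem_cons.mp ih with h' | h'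
      · rw [h']; exact mem_cons_self
      · exact mem_cons_of_mem _ (mem_cons_of_mem _ h')

theorem le_foldr_max_of_mem {a x : α} {l : List α} (hx : x ∈ a :: l) : x ≤ l.foldr max a := by
  obtain rfl | hx := mem_cons.mp hx
  · induction l with
    | nil => exact le_rfl
    | cons b l ih => exact le_max_of_le_right (ih mem_cons_self)
  · exact le_max_of_le' a hx le_rfl

end List

namespace GameTree

theorem R_node (c : GameTree) (cs : List GameTree) :
    R (node c cs) = ((cs.map R).foldr min (R c) + (cs.map R).foldr max (R c)) / 2 := by
  rw [R]
  simp only [List.map_attach_eq_pmap, List.pmap_eq_map]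

theorem exists_mem_R_eq_foldr_min (c : GameTree) (cs : List GameTree) :
    ∃ w ∈ c :: cs, R w = (cs.map R).foldr min (R c) := by
  simpa [eq_comm] using List.foldr_min_mem (R c) (cs.map R)

theorem R_le_foldr_max {c w : GameTree} {cs : List GameTree} (hw : w ∈ c :: cs) :
    R w ≤ (cs.map R).foldr max (R c) :=
  List.le_foldr_max_of_mem (by simpa using List.mem_map_of_mem (f := R) hw)

theorem R_nonneg : ∀ t : GameTree, 0 ≤ R t
  | leaf .alice => by simp [R]
  | leaf .bob => by simp [R]
  | node c cs => by
      obtain ⟨w, hw, hmin⟩ := exists_mem_R_eq_foldr_min c cs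
      have := R_nonneg w
      have := R_le_foldr_max hw
      rw [R_node]
      linarith
decreasing_by
  have h := List.sizeOf_lt_of_mem hw
  simp only [GameTree.node.sizeOf_spec, List.cons.sizeOf_spec] at h ⊢
  omega

/-- **Optimal bid lemma.** Let `node c cs` be an internal node with children
`c :: cs`, let `m` and `M` be the minimum and maximum Richman values of the
children, and set `b = (M - m)/2`.  If `x > R (node c cs)`, then `0 ≤ b ≤ x`,
there is a child `w₀` with `x - b > R w₀`, and every child `w` satisfies
`x + b > R w`. -/
theorem optimal_bid (c : GameTree) (cs : List GameTree) (x : ℝ)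
    (hx : x > R (node c cs)) :
    0 ≤ ((cs.map R).foldr max (R c) - (cs.map R).foldr min (R c)) / 2 ∧
    ((cs.map R).foldr max (R c) - (cs.map R).foldr min (R c)) / 2 ≤ x ∧
    (∃ w₀ ∈ c :: cs,
      x - ((cs.map R).foldr max (R c) - (cs.map R).foldr min (R c)) / 2 > R w₀) ∧
    (∀ w ∈ c :: cs,
      x + ((cs.map R).foldr max (R c) - (cs.map R).foldr min (R c)) / 2 > R w) := by
  rw [R_node] at hx
  obtain ⟨w₀, hw₀, hmin⟩ := exists_mem_R_eq_foldr_min c cs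
  have hm_nonneg := hmin ▸ R_nonneg w₀
  have hm_le_M := hmin ▸ R_le_foldr_max hw₀
  refine ⟨by linarith, by linarith, ⟨w₀, hw₀, by linarith⟩, fun w hw => ?_⟩
  have := R_le_foldr_max hw
  linarith

end GameTree
end

section
/- Exclusivity of bidding wins: for every finite game tree G and every real number x, the predicates A(G, x) and B(G, x) do not both hold. -/
namespace GameTree

/-- Alice's winning predicate for the continuous bidding game with ties
resolved against Alice.  `A G x` (where `x` is Alice's share of the chips,
normalized so the shares sum to `1`) holds at a leaf iff Alice wins there,
and at an internal node iff there is a bid `b` with `0 ≤ b ≤ x` such that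
Alice wins some child with share `x - b` (she wins the bid and moves there)
and Alice wins every child with share `x + b` (Bob wins the bid, pays at
least `b`, and moves anywhere). -/
inductive A : GameTree → ℝ → Prop
  | leaf (x : ℝ) : A (leaf .alice) x
  | node (c : GameTree) (cs : List GameTree) (x b : ℝ)
      (hb0 : 0 ≤ b) (hbx : b ≤ x)
      (w : GameTree) (hw : w ∈ c :: cs) (hwin : A w (x - b))
      (hlose : ∀ u ∈ c :: cs, A u (x + b)) :
      A (node c cs) x

/-- Bob's winning predicate for the continuous bidding game with ties
resolved against Bob.  `B G x` (where `x` is Alice's share of the chips)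
holds at a leaf iff Bob wins there, and at an internal node iff there is a
bid `b` with `0 ≤ b ≤ 1 - x` such that Bob wins some child when Alice's
share is `x + b` (he wins the bid, pays `b` to Alice, and moves there) and
Bob wins every child when Alice's share is `x - b` (Alice wins the bid,
pays at least `b`, and moves anywhere). -/
inductive B : GameTree → ℝ → Prop
  | leaf (x : ℝ) : B (leaf .bob) x
  | node (c : GameTree) (cs : List GameTree) (x b : ℝ)
      (hb0 : 0 ≤ b) (hbx : b ≤ 1 - x)
      (w : GameTree) (hw : w ∈ c :: cs) (hwin : B w (x + b))
      (hlose : ∀ u ∈ c :: cs, B u (x - b)) :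
      B (node c cs) x

/-- At a node, compare the bids `b` of Alice and `b'` of Bob: if `b' ≤ b`, Bob's
chosen child at `y + b' ≤ x + b` is one Alice wins after losing the bid;
otherwise Alice's chosen child at `x - b > y - b'` is one Bob wins after
losing the bid. -/
theorem A.not_B_of_le {G : GameTree} {x y : ℝ} (hA : A G x) (hyx : y ≤ x) : ¬B G y := by
  induction hA generalizing y with
  | leaf => rintro ⟨⟩
  | node c cs x b _ _ w hw _ _ ih_win ih_lose =>
    rintro (_ | ⟨_, _, _, b', _, _, w', hw', hwin', hlose'⟩)
    rcases le_or_gt b' b with hbb' | hbb'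
    · exact ih_lose w' hw' (by linarith) hwin'
    · exact ih_win (by linarith) (hlose' w hw)

/-- **Exclusivity of bidding wins.** For every finite game tree `G` and every
real `x`, Alice and Bob cannot both win the continuous bidding game. -/
theorem bidding_win_exclusive (G : GameTree) (x : ℝ) : ¬(A G x ∧ B G x) :=
  fun ⟨hA, hB⟩ => hA.not_B_of_le le_rfl hB

end GameTree
end

section
/- Optimal-move correspondence: let v be an internal node of a finite game tree with nonempty finite set of children S. A child w ∈ S satisfies R(w) = min_{u∈S} R(u) if and only if it satisfies P(w) = max_{u∈S} P(u); that is, a move is optimal for Alice in the continuous bidding game if and only if it is optimal for her in the random-turn game. -/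
namespace GameTree

/-- The random-turn value (probability that Alice wins under optimal play when
a fair coin decides who moves): `P (leaf alice) = 1`, `P (leaf bob) = 0`, and
at an internal node it is the average of the maximum and minimum of the values
of the children. -/
noncomputable def P : GameTree → ℝ
  | leaf .alice => 1
  | leaf .bob => 0
  | node c cs =>
      ((cs.attach.map fun w => P w.1).foldr max (P c) +
       (cs.attach.map fun w => P w.1).foldr min (P c)) / 2
decreasing_by
  all_goals simp only [GameTree.node.sizeOf_spec]
  all_goals try omega
  all_goals (have h := List.sizeOf_lt_of_mem w.2; omega)

/-! `P = 1 - R` node by node, because `x ↦ 1 - x` is antitone and so swaps the `min` and `max`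
in the two recursions. Alice's best move minimises `R` exactly when it maximises `1 - R = P`. -/

theorem _root_.Antitone.map_foldr_min {α β : Type*} [LinearOrder α] [LinearOrder β] {f : α → β}
    (hf : Antitone f) (l : List α) (a : α) :
    f (l.foldr min a) = (l.map f).foldr max (f a) := by
  rw [List.foldr_map]
  exact (List.foldr_hom f fun _ _ => hf.map_min.symm).symm

theorem _root_.Antitone.map_foldr_max {α β : Type*} [LinearOrder α] [LinearOrder β] {f : α → β}
    (hf : Antitone f) (l : List α) (a : α) :
    f (l.foldr max a) = (l.map f).foldr min (f a) := by
  rw [List.foldr_map]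
  exact (List.foldr_hom f fun _ _ => hf.map_max.symm).symm

theorem P_node (c : GameTree) (cs : List GameTree) :
    P (node c cs) = ((cs.map P).foldr max (P c) + (cs.map P).foldr min (P c)) / 2 := by
  rw [P, List.attach_map_val]

theorem P_eq_one_sub_R : ∀ t : GameTree, P t = 1 - R t
  | leaf .alice => by simp [P, R]
  | leaf .bob => by simp [P, R]
  | node c cs => by
    have ih : ∀ u ∈ c :: cs, P u = 1 - R u := fun u _ => P_eq_one_sub_R u
    have hmap : cs.map P = (cs.map R).map (1 - ·) := by
      rw [List.map_map]
      exact List.map_congr_left fun u hu => ih u (List.mem_cons_of_mem c hu)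
    rw [P_node, R_node, hmap, ih c List.mem_cons_self, ← antitone_const_tsub.map_foldr_min,
      ← antitone_const_tsub.map_foldr_max]
    ring
decreasing_by
  simp only [GameTree.node.sizeOf_spec]
  rcases List.mem_cons.mp ‹u ∈ c :: cs› with rfl | hu
  · omega
  · have := List.sizeOf_lt_of_mem hu
    omega

theorem optimal_move_correspondence_general (c : GameTree) (cs : List GameTree)
    (w : GameTree) :
    R w = (cs.map R).foldr min (R c) ↔ P w = (cs.map P).foldr max (P c) := by
  have hmax : (cs.map P).foldr max (P c) = 1 - (cs.map R).foldr min (R c) := by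
    rw [antitone_const_tsub.map_foldr_min, List.map_map]
    simp only [Function.comp_def, ← P_eq_one_sub_R]
  rw [hmax, P_eq_one_sub_R w, sub_right_inj]

/-- **Optimal-move correspondence.** Let `node c cs` be an internal node with
children `c :: cs`.  A child `w` has minimal Richman value among the children
if and only if it has maximal random-turn value among the children; that is,
a move is optimal for Alice in the continuous bidding game iff it is optimal
for her in the random-turn game. -/
theorem optimal_move_correspondence (c : GameTree) (cs : List GameTree)
    (w : GameTree) (hw : w ∈ c :: cs) :
    R w = (cs.map R).foldr min (R c) ↔ P w = (cs.map P).foldr max (P c) :=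
  optimal_move_correspondence_general c cs w

end GameTree
end
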